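/- arXiv:2410.10337 — 2 statements merged into one kernel-verified Lean document; each statement's English description precedes it below -/
import Mathlib

section
/- Let G be a finite undirected graph with minimum degree at least 2. The non-backtracking adjacency matrix B of G (equivalently, the NBRW Markov chain on G) is irreducible if and only if G is connected, has minimum degree at least 2, and has maximum degree greater than 2. -/
open Finset Filter

namespace NB

variable {V : Type} [Fintype V] [DecidableEq V] (G : SimpleGraph V) [DecidableRel G.Adj]

/-- Transition relation between darts: `e → f` iff the head of `e` is the tail of `f`
and `f` is not the reversal of `e`. -/
def Step (d e : G.Dart) : Prop := d.snd = e.fst ∧ e ≠ d.symm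

instance (d e : G.Dart) : Decidable (Step G d e) :=
  inferInstanceAs (Decidable (d.snd = e.fst ∧ e ≠ d.symm))

/-- `outdeg(e) = deg(h(e)) - 1`. -/
def outdeg (d : G.Dart) : ℕ := G.degree d.snd - 1

/-- `indeg(e) = deg(t(e)) - 1`. -/
def indeg (d : G.Dart) : ℕ := G.degree d.fst - 1

/-- The non-backtracking adjacency matrix. -/
def B : Matrix G.Dart G.Dart ℝ := fun d e => if Step G d e then 1 else 0

/-- The NBRW transition matrix. -/
noncomputable def transMat : Matrix G.Dart G.Dart ℝ :=
  fun d e => if Step G d e then ((outdeg G d : ℝ))⁻¹ else 0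

/-- NB-irreducibility: connected, min degree ≥ 2, max degree > 2. -/
def NBIrreducible : Prop :=
  G.Connected ∧ (∀ v, 2 ≤ G.degree v) ∧ (∃ v, 2 < G.degree v)

/-- `Λ(G)`, the geometric mean of out-degrees over directed edges. -/
noncomputable def Lambda : ℝ :=
  (∏ d : G.Dart, (outdeg G d : ℝ)) ^ ((Fintype.card G.Dart : ℝ)⁻¹)

/-- The Perron (largest real) eigenvalue of a matrix. -/
noncomputable def perron {n : Type} [Fintype n] (M : Matrix n n ℝ) : ℝ :=
  sSup {r : ℝ | ∃ v : n → ℝ, v ≠ 0 ∧ M.mulVec v = r • v}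

/-- A length-`ℓ` non-backtracking walk is a sequence of `ℓ+1` darts with consecutive
transitions. -/
def IsNBWalk {ℓ : ℕ} (ω : Fin (ℓ + 1) → G.Dart) : Prop :=
  ∀ i : Fin ℓ, Step G (ω i.castSucc) (ω i.succ)

instance {ℓ : ℕ} (ω : Fin (ℓ + 1) → G.Dart) : Decidable (IsNBWalk G ω) :=
  inferInstanceAs (Decidable (∀ i : Fin ℓ, Step G (ω i.castSucc) (ω i.succ)))

/-- The set `Ω_ℓ` of length-`ℓ` non-backtracking walks. -/
def NBWalk (ℓ : ℕ) : Type := {ω : Fin (ℓ + 1) → G.Dart // IsNBWalk G ω}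

instance (ℓ : ℕ) : Fintype (NBWalk G ℓ) := Subtype.fintype _

/-- The NBRW probability of a walk, started from the uniform stationary distribution. -/
noncomputable def mu {ℓ : ℕ} (ω : NBWalk G ℓ) : ℝ :=
  (Fintype.card G.Dart : ℝ)⁻¹ * ∏ i : Fin ℓ, ((outdeg G (ω.1 i.castSucc) : ℝ))⁻¹

/-- Expectation over `Ω_ℓ` with respect to `μ`. -/
noncomputable def expect {ℓ : ℕ} (X : NBWalk G ℓ → ℝ) : ℝ :=
  ∑ ω : NBWalk G ℓ, mu G ω * X ω

/-- Variance over `Ω_ℓ` with respect to `μ`. -/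
noncomputable def var {ℓ : ℕ} (X : NBWalk G ℓ → ℝ) : ℝ :=
  expect G (fun ω => (X ω - expect G X) ^ 2)

/-- `R_ℓ(ω) = ∑ log₂ outdeg(e_i)`: the number of random bits consumed. -/
noncomputable def bits {ℓ : ℕ} (ω : NBWalk G ℓ) : ℝ :=
  ∑ i : Fin ℓ, Real.logb 2 (outdeg G (ω.1 i.castSucc))

/-- A suspended path `(e_0, …, e_n)` (of length `n+1`). -/
def IsSuspendedPath {n : ℕ} (P : Fin (n + 1) → G.Dart) : Prop :=
  (∀ i : Fin n, Step G (P i.castSucc) (P i.succ)) ∧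
  (∀ i : Fin n, outdeg G (P i.castSucc) = 1) ∧
  1 < outdeg G (P (Fin.last n)) ∧
  (∀ i : Fin n, indeg G (P i.succ) = 1) ∧
  1 < indeg G (P 0)

/-- The suspended path condition: `outdeg(P)·indeg(P) = Λ(G)^{2|P|}`. -/
noncomputable def SuspendedPathCondition : Prop :=
  ∀ (n : ℕ) (P : Fin (n + 1) → G.Dart), IsSuspendedPath G P →
    (outdeg G (P (Fin.last n)) : ℝ) * (indeg G (P 0) : ℝ) = Lambda G ^ (2 * (n + 1))

/-- A non-backtracking cycle `(e_0, …, e_n)` (of length `n+1`). -/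
def IsNBCycle {n : ℕ} (C : Fin (n + 1) → G.Dart) : Prop :=
  ∀ i : Fin (n + 1), Step G (C i) (C (i + 1))

/-- The cycle condition: `∏_{e∈C} outdeg(e) = Λ(G)^{|C|}`. -/
noncomputable def CycleCondition : Prop :=
  ∀ (n : ℕ) (C : Fin (n + 1) → G.Dart), IsNBCycle G C →
    (∏ i : Fin (n + 1), (outdeg G (C i) : ℝ)) = Lambda G ^ (n + 1)


/-- A nonnegative matrix is irreducible if every entry of some power is positive. -/
def MatIrreducible {n : Type} [Fintype n] [DecidableEq n] (M : Matrix n n ℝ) : Prop :=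
  ∀ i j : n, ∃ k : ℕ, 0 < (M ^ k) i j

/-! ### Auxiliary development -/

set_option linter.unusedSectionVars false

/-- Reflexive-transitive reachability in the dart graph. -/
def Reach (d e : G.Dart) : Prop := Relation.ReflTransGen (Step G) d e

variable {G}

lemma step_symm {d e : G.Dart} (h : Step G d e) : Step G e.symm d.symm := by
  obtain ⟨h1, h2⟩ := h
  refine ⟨by simp [h1], ?_⟩
  simp only [ne_eq, SimpleGraph.Dart.symm_symm]
  intro he; exact h2 (by simp [he])

lemma reach_symm {d e : G.Dart} (h : Reach G d e) : Reach G e.symm d.symm := by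
  induction h with
  | refl => exact Relation.ReflTransGen.refl
  | tail _ hstep ih =>
    exact Relation.ReflTransGen.trans (Relation.ReflTransGen.single (step_symm hstep)) ih

lemma B_entry_nonneg (d e : G.Dart) : 0 ≤ B G d e := by
  unfold B; split <;> norm_num

lemma B_pow_nonneg (k : ℕ) (d e : G.Dart) : 0 ≤ (B G ^ k) d e := by
  induction k generalizing d e with
  | zero =>
    simp only [pow_zero, Matrix.one_apply]
    split <;> norm_num
  | succ n ih =>
    rw [pow_succ, Matrix.mul_apply]
    exact Finset.sum_nonneg fun f _ => mul_nonneg (ih d f) (B_entry_nonneg f e)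

lemma reach_of_pow_pos {k : ℕ} {d e : G.Dart} (h : 0 < (B G ^ k) d e) : Reach G d e := by
  induction k generalizing e with
  | zero =>
    simp only [pow_zero, Matrix.one_apply] at h
    split at h
    · subst ‹d = e›; exact Relation.ReflTransGen.refl
    · norm_num at h
  | succ n ih =>
    rw [pow_succ, Matrix.mul_apply] at h
    obtain ⟨f, _, hf⟩ : ∃ f ∈ Finset.univ, 0 < (B G ^ n) d f * B G f e := by
      by_contra hc
      push_neg at hc
      have : ∑ f : G.Dart, (B G ^ n) d f * B G f e ≤ 0 :=
        Finset.sum_nonpos fun f hf => hc f hf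
      linarith
    have h1 : 0 < (B G ^ n) d f := by
      rcases lt_or_eq_of_le (B_pow_nonneg (G := G) n d f) with h' | h'
      · exact h'
      · rw [← h'] at hf; simp at hf
    have h2 : 0 < B G f e := by
      rcases lt_or_eq_of_le (B_entry_nonneg (G := G) f e) with h' | h'
      · exact h'
      · rw [← h'] at hf; simp at hf
    have hs : Step G f e := by
      by_contra hns; unfold B at h2; rw [if_neg hns] at h2; norm_num at h2
    exact Relation.ReflTransGen.tail (ih h1) hs

lemma pow_pos_of_reach {d e : G.Dart} (h : Reach G d e) : ∃ k, 0 < (B G ^ k) d e := by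
  induction h with
  | refl => exact ⟨0, by simp [Matrix.one_apply]⟩
  | @tail f e hr hstep ih =>
    obtain ⟨k, hk⟩ := ih
    refine ⟨k + 1, ?_⟩
    rw [pow_succ, Matrix.mul_apply]
    have hBfe : B G f e = 1 := by unfold B; rw [if_pos hstep]
    have hterm : 0 < (B G ^ k) d f * B G f e := by rw [hBfe]; simpa using hk
    have := Finset.single_le_sum
      (f := fun g => (B G ^ k) d g * B G g e)
      (fun g _ => mul_nonneg (B_pow_nonneg k d g) (B_entry_nonneg g e))
      (Finset.mem_univ f)
    linarith

lemma matIrreducible_iff_reach : MatIrreducible (B G) ↔ ∀ d e : G.Dart, Reach G d e := by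
  constructor
  · intro h d e
    obtain ⟨k, hk⟩ := h d e
    exact reach_of_pow_pos hk
  · intro h d e
    exact pow_pos_of_reach (h d e)

/-! ### Basic dart lemmas -/

lemma exists_step (hdeg : ∀ v : V, 2 ≤ G.degree v) (d : G.Dart) : ∃ e, Step G d e := by
  have hcard : 1 < (G.neighborFinset d.snd).card := by
    rw [G.card_neighborFinset_eq_degree]; exact lt_of_lt_of_le one_lt_two (hdeg d.snd)
  obtain ⟨b, hb, hbne⟩ := Finset.exists_mem_ne hcard d.fst
  rw [SimpleGraph.mem_neighborFinset] at hb
  refine ⟨⟨(d.snd, b), hb⟩, rfl, ?_⟩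
  intro h
  apply hbne
  have := congrArg (fun (x : G.Dart) => x.snd) h
  simpa using this

lemma dart_eq_symm_iff {d e : G.Dart} (hfst : e.fst = d.snd) : e = d.symm ↔ e.snd = d.fst := by
  constructor
  · intro h; rw [h]; simp
  · intro h
    apply SimpleGraph.Dart.ext
    exact Prod.ext (by simpa using hfst) (by simpa using h)

lemma step_unique {d e f : G.Dart} (h2 : G.degree d.snd = 2)
    (he : Step G d e) (hf : Step G d f) : e = f := by
  obtain ⟨he1, he2⟩ := he
  obtain ⟨hf1, hf2⟩ := hf
  have hcard : (G.neighborFinset d.snd).card = 2 := by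
    rw [G.card_neighborFinset_eq_degree]; exact h2
  obtain ⟨x, y, hxy, hs⟩ := Finset.card_eq_two.mp hcard
  have hmem : ∀ z : V, G.Adj d.snd z → z = x ∨ z = y := by
    intro z hz
    have : z ∈ G.neighborFinset d.snd := (SimpleGraph.mem_neighborFinset _ _ _).mpr hz
    rw [hs] at this; simpa using this
  have hesnd : e.snd ≠ d.fst := fun h => he2 ((dart_eq_symm_iff he1.symm).mpr h)
  have hfsnd : f.snd ≠ d.fst := fun h => hf2 ((dart_eq_symm_iff hf1.symm).mpr h)
  have hadje : G.Adj d.snd e.snd := he1 ▸ e.adj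
  have hadjf : G.Adj d.snd f.snd := hf1 ▸ f.adj
  have hadjd : G.Adj d.snd d.fst := d.adj.symm
  have hsnd : e.snd = f.snd := by
    rcases hmem _ hadje with h1 | h1 <;> rcases hmem _ hadjf with h2 | h2 <;>
      rcases hmem _ hadjd with h3 | h3 <;> first
        | (exact h1.trans h2.symm)
        | (exfalso; apply hesnd; rw [h1, ← h3])
        | (exfalso; apply hfsnd; rw [h2, ← h3])
  apply SimpleGraph.Dart.ext
  exact Prod.ext (by simp [← he1, ← hf1]) hsnd

lemma reach_head_reachable {d e : G.Dart} (h : Reach G d e) : G.Reachable d.fst e.fst := by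
  induction h with
  | refl => exact SimpleGraph.Reachable.refl _
  | @tail f g hr hstep ih =>
    exact ih.trans (SimpleGraph.Reachable.trans ⟨f.adj.toWalk⟩
      (by rw [hstep.1]))

lemma exists_dart (hdeg : ∀ v : V, 2 ≤ G.degree v) (v : V) : ∃ d : G.Dart, d.fst = v := by
  have hcard : 0 < (G.neighborFinset v).card := by
    rw [G.card_neighborFinset_eq_degree]
    exact Nat.lt_of_lt_of_le Nat.zero_lt_two (hdeg v)
  obtain ⟨b, hb⟩ := Finset.card_pos.mp hcard
  rw [SimpleGraph.mem_neighborFinset] at hb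
  exact ⟨⟨(v, b), hb⟩, rfl⟩

/-! ### Forward direction -/

lemma forward_dir [Nonempty V] (hdeg : ∀ v : V, 2 ≤ G.degree v)
    (hirr : ∀ d e : G.Dart, Reach G d e) :
    G.Connected ∧ (∀ v : V, 2 ≤ G.degree v) ∧ ∃ v : V, 2 < G.degree v := by
  refine ⟨⟨fun u v => ?_⟩, hdeg, ?_⟩
  · obtain ⟨du, hdu⟩ := exists_dart hdeg u
    obtain ⟨dv, hdv⟩ := exists_dart hdeg v
    have := reach_head_reachable (hirr du dv)
    rwa [hdu, hdv] at this
  · by_contra hmax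
    push_neg at hmax
    have hdeg2 : ∀ v : V, G.degree v = 2 := fun v => le_antisymm (hmax v) (hdeg v)
    choose next hnext using exists_step hdeg
    have huniq : ∀ d e : G.Dart, Step G d e → e = next d :=
      fun d e he => step_unique (hdeg2 d.snd) he (hnext d)
    obtain ⟨d0, _⟩ := exists_dart hdeg (Classical.arbitrary V)
    have hiter : ∀ e : G.Dart, Reach G d0 e → ∃ k : ℕ, e = next^[k] d0 := by
      intro e h
      induction h with
      | refl => exact ⟨0, rfl⟩
      | @tail f g hr hstep ih =>
        obtain ⟨k, hk⟩ := ih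
        exact ⟨k + 1, by rw [Function.iterate_succ_apply', ← hk, ← huniq f g hstep]⟩
    obtain ⟨k, hk⟩ := hiter d0.symm (hirr d0 d0.symm)
    -- palindrome: ∀ i ≤ k, next^[k-i] d0 = (next^[i] d0).symm
    have hpal : ∀ i, i ≤ k → next^[k - i] d0 = (next^[i] d0).symm := by
      intro i
      induction i with
      | zero => intro _; simpa using hk.symm
      | succ i ih =>
        intro hik
        have hih := ih (le_of_lt (Nat.lt_of_succ_le hik))
        have hkk : k - i = (k - (i + 1)) + 1 := by omega
        set b := next^[k - (i + 1)] d0 with hb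
        have hit : next^[(k - (i + 1)) + 1] d0 = next (next^[k - (i + 1)] d0) :=
          Function.iterate_succ_apply' next _ d0
        have hnb : next b = (next^[i] d0).symm := by
          rw [hb, ← hit, ← hkk, hih]
        have hstep1 : Step G b (next b) := hnext b
        rw [hnb] at hstep1
        have hstep2 : Step G (next^[i] d0) b.symm := by
          have := step_symm hstep1
          simpa using this
        have := huniq _ _ hstep2
        rw [Function.iterate_succ_apply']
        rw [← this]
        simp
    rcases Nat.even_or_odd k with ⟨m, hm⟩ | ⟨m, hm⟩
    · -- k = 2m : next^[m] d0 = its own symm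
      rcases Nat.eq_zero_or_pos k with hk0 | hkpos
      · subst hk0
        simp only [Function.iterate_zero, id] at hk
        exact SimpleGraph.Dart.symm_ne d0 hk
      have := hpal m (by omega)
      rw [show k - m = m by omega] at this
      exact SimpleGraph.Dart.symm_ne _ this.symm
    · -- k = 2m+1 : next^[m+1] d0 = (next^[m] d0).symm contradicts Step
      have := hpal (m + 1) (by omega)
      rw [show k - (m + 1) = m by omega] at this
      have hstep1 : Step G (next^[m] d0) (next^[m + 1] d0) := by
        rw [Function.iterate_succ_apply']
        exact hnext _
      exact hstep1.2 (by rw [this]; simp)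

/-! ### Paths -/

lemma path_reach_fwd (x : ℕ → V) (m : ℕ)
    (hinj : ∀ i j, i ≤ m + 1 → j ≤ m + 1 → x i = x j → i = j)
    (hadj : ∀ i, i ≤ m → G.Adj (x i) (x (i + 1))) :
    ∀ i (hi : i ≤ m), Reach G ⟨(x 0, x 1), hadj 0 (Nat.zero_le m)⟩ ⟨(x i, x (i + 1)), hadj i hi⟩ := by
  intro i
  induction i with
  | zero => intro _; exact Relation.ReflTransGen.refl
  | succ i ih =>
    intro hi
    refine Relation.ReflTransGen.tail (ih (by omega)) ?_
    refine ⟨rfl, ?_⟩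
    intro hcon
    have hx : x (i + 1 + 1) = x i := by
      have := congrArg (fun (z : G.Dart) => z.snd) hcon
      simpa using this
    have := hinj (i + 1 + 1) i (by omega) (by omega) hx
    omega

lemma path_reach_bwd (x : ℕ → V) (m : ℕ)
    (hinj : ∀ i j, i ≤ m + 1 → j ≤ m + 1 → x i = x j → i = j)
    (hadj : ∀ i, i ≤ m → G.Adj (x i) (x (i + 1))) :
    ∀ i (hi : i ≤ m), Reach G ⟨(x (i + 1), x i), (hadj i hi).symm⟩
      ⟨(x 1, x 0), (hadj 0 (Nat.zero_le m)).symm⟩ := by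
  intro i
  induction i with
  | zero => intro _; exact Relation.ReflTransGen.refl
  | succ i ih =>
    intro hi
    refine Relation.ReflTransGen.head ?_ (ih (by omega))
    refine ⟨rfl, ?_⟩
    intro hcon
    have hx : x i = x (i + 1 + 1) := by
      have := congrArg (fun (z : G.Dart) => z.snd) hcon
      simpa using this
    have := hinj i (i + 1 + 1) (by omega) (by omega) hx
    omega

/-! ### The trail lemma -/

/-- Conclusion of the trail lemma: an injective cycle starting along `d`. -/
def TrailCycle (d : G.Dart) : Prop :=
  ∃ (n : ℕ), 3 ≤ n ∧ ∃ (y : ZMod n → V), Function.Injective y ∧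
    ∃ (_ : ∀ i : ZMod n, G.Adj (y i) (y (i + 1))), y 0 = d.fst ∧ y 1 = d.snd

lemma trail_found {d : G.Dart} (hrev : ¬ Reach G d d.symm) (m : ℕ) (x : ℕ → V)
    (hinj : ∀ i j, i ≤ m + 1 → j ≤ m + 1 → x i = x j → i = j)
    (hadj : ∀ i, i ≤ m → G.Adj (x i) (x (i + 1)))
    (h0 : x 0 = d.fst) (h1 : x 1 = d.snd)
    (b : V) (hb : G.Adj (x (m + 1)) b) (hbm : b ≠ x m)
    (i : ℕ) (hi : i ≤ m + 1) (hxi : x i = b) : TrailCycle d := by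
  have hbne1 : b ≠ x (m + 1) := fun h => G.irrefl (h ▸ hb)
  have him1 : i ≠ m + 1 := fun h => hbne1 (h ▸ hxi).symm
  have him : i ≠ m := fun h => hbm (h ▸ hxi).symm
  have hd : d = ⟨(x 0, x 1), hadj 0 (Nat.zero_le m)⟩ := by
    apply SimpleGraph.Dart.ext
    exact Prod.ext (by simpa using h0.symm) (by simpa using h1.symm)
  rcases Nat.eq_zero_or_pos i with hi0 | hipos
  · -- cycle found
    subst hi0
    have hm1 : 1 ≤ m := by omega
    haveI : NeZero (m + 2) := ⟨by omega⟩
    haveI : Fact (1 < m + 2) := ⟨by omega⟩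
    refine ⟨m + 2, by omega, fun z : ZMod (m + 2) => x z.val, ?_, ⟨?_, ?_, ?_⟩⟩
    · intro a b hab
      have ha := ZMod.val_lt a
      have hbv := ZMod.val_lt b
      have := hinj a.val b.val (by omega) (by omega) hab
      exact ZMod.val_injective _ this
    · intro z
      show G.Adj (x z.val) (x (z + 1).val)
      have hzv := ZMod.val_lt z
      have hone : (1 : ZMod (m + 2)).val = 1 := ZMod.val_one _
      have hval : (z + 1).val = (z.val + 1) % (m + 2) := by
        rw [ZMod.val_add, hone]
      rcases Nat.lt_or_ge z.val (m + 1) with hlt | hge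
      · have : (z + 1).val = z.val + 1 := by rw [hval, Nat.mod_eq_of_lt (by omega)]
        rw [this]
        exact hadj z.val (by omega)
      · have hz1 : z.val = m + 1 := by omega
        have : (z + 1).val = 0 := by rw [hval, hz1]; simp
        rw [this, hz1, hxi]
        exact hb
    · show x (0 : ZMod (m + 2)).val = d.fst
      rw [show (0 : ZMod (m + 2)).val = 0 from ZMod.val_zero, h0]
    · show x (1 : ZMod (m + 2)).val = d.snd
      rw [show (1 : ZMod (m + 2)).val = 1 from ZMod.val_one _, h1]
  · -- i ≥ 1 : contradiction with hrev
    exfalso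
    obtain ⟨i', rfl⟩ : ∃ i', i = i' + 1 := ⟨i - 1, by omega⟩
    have hii' : i' ≤ m := by omega
    have hadjb : G.Adj (x (m + 1)) (x (i' + 1)) := by rw [hxi]; exact hb
    apply hrev
    have e1 : Reach G d ⟨(x m, x (m + 1)), hadj m le_rfl⟩ := by
      rw [hd]; exact path_reach_fwd x m hinj hadj m le_rfl
    have s1 : Step G ⟨(x m, x (m + 1)), hadj m le_rfl⟩ ⟨(x (m + 1), x (i' + 1)), hadjb⟩ := by
      refine ⟨rfl, ?_⟩
      intro hcon
      have : x (i' + 1) = x m := by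
        have := congrArg (fun (z : G.Dart) => z.snd) hcon
        simpa using this
      exact hbm (this ▸ hxi).symm
    have s2 : Step G ⟨(x (m + 1), x (i' + 1)), hadjb⟩
        ⟨(x (i' + 1), x i'), (hadj i' hii').symm⟩ := by
      refine ⟨rfl, ?_⟩
      intro hcon
      have hx : x i' = x (m + 1) := by
        have := congrArg (fun (z : G.Dart) => z.snd) hcon
        simpa using this
      have := hinj i' (m + 1) (by omega) (by omega) hx
      omega
    have e2 : Reach G ⟨(x (i' + 1), x i'), (hadj i' hii').symm⟩
        ⟨(x 1, x 0), (hadj 0 (Nat.zero_le m)).symm⟩ := path_reach_bwd x m hinj hadj i' hii'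
    have hd' : d.symm = ⟨(x 1, x 0), (hadj 0 (Nat.zero_le m)).symm⟩ := by
      apply SimpleGraph.Dart.ext
      exact Prod.ext (by simpa using h1.symm) (by simpa using h0.symm)
    rw [hd']
    exact (((e1.tail s1).tail s2)).trans e2

lemma trail_aux (hdeg : ∀ v : V, 2 ≤ G.degree v) (d : G.Dart)
    (hrev : ¬ Reach G d d.symm) :
    ∀ (fuel m : ℕ) (x : ℕ → V), Fintype.card V ≤ fuel + m + 2 →
    (∀ i j, i ≤ m + 1 → j ≤ m + 1 → x i = x j → i = j) →
    (∀ i, i ≤ m → G.Adj (x i) (x (i + 1))) →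
    x 0 = d.fst → x 1 = d.snd → TrailCycle d := by
  intro fuel
  induction fuel with
  | zero =>
    intro m x hcard hinj hadj h0 h1
    -- find the next vertex
    have hcard2 : 1 < (G.neighborFinset (x (m + 1))).card := by
      rw [G.card_neighborFinset_eq_degree]
      exact lt_of_lt_of_le one_lt_two (hdeg _)
    obtain ⟨b, hb, hbne⟩ := Finset.exists_mem_ne hcard2 (x m)
    rw [SimpleGraph.mem_neighborFinset] at hb
    by_cases hrep : ∃ i, i ≤ m + 1 ∧ x i = b
    · obtain ⟨i, hi, hxi⟩ := hrep
      exact trail_found hrev m x hinj hadj h0 h1 b hb hbne i hi hxi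
    · -- contradiction : too many vertices
      exfalso
      push_neg at hrep
      have hsub : (insert b ((Finset.range (m + 2)).image x)).card = m + 3 := by
        rw [Finset.card_insert_of_notMem, Finset.card_image_of_injOn, Finset.card_range]
        · intro a ha a' ha' haa
          rw [Finset.mem_coe, Finset.mem_range] at ha ha'
          exact hinj a a' (by omega) (by omega) haa
        · intro hmem
          obtain ⟨i, hi, hxi⟩ := Finset.mem_image.mp hmem
          rw [Finset.mem_range] at hi
          exact hrep i (by omega) hxi
      have := Finset.card_le_univ (insert b ((Finset.range (m + 2)).image x))
      rw [hsub] at this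
      omega
  | succ fuel ihf =>
    intro m x hcard hinj hadj h0 h1
    have hcard2 : 1 < (G.neighborFinset (x (m + 1))).card := by
      rw [G.card_neighborFinset_eq_degree]
      exact lt_of_lt_of_le one_lt_two (hdeg _)
    obtain ⟨b, hb, hbne⟩ := Finset.exists_mem_ne hcard2 (x m)
    rw [SimpleGraph.mem_neighborFinset] at hb
    by_cases hrep : ∃ i, i ≤ m + 1 ∧ x i = b
    · obtain ⟨i, hi, hxi⟩ := hrep
      exact trail_found hrev m x hinj hadj h0 h1 b hb hbne i hi hxi
    · -- extend the path
      push_neg at hrep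
      set x' := Function.update x (m + 2) b with hx'
      have hxeq : ∀ i, i ≤ m + 1 → x' i = x i := by
        intro i hi
        have hne : i ≠ m + 2 := by omega
        exact Function.update_of_ne hne b x
      have hxlast : x' (m + 2) = b := Function.update_self _ _ _
      refine ihf (m + 1) x' (by omega) ?_ ?_ ?_ ?_
      · intro i j hi hj hxy
        rcases Nat.lt_or_ge i (m + 2) with hilt | hige
        · rcases Nat.lt_or_ge j (m + 2) with hjlt | hjge
          · rw [hxeq i (by omega), hxeq j (by omega)] at hxy
            exact hinj i j (by omega) (by omega) hxy
          · have hj2 : j = m + 2 := by omega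
            subst hj2
            rw [hxeq i (by omega), hxlast] at hxy
            exact absurd hxy (hrep i (by omega))
        · have hi2 : i = m + 2 := by omega
          subst hi2
          rcases Nat.lt_or_ge j (m + 2) with hjlt | hjge
          · rw [hxeq j (by omega), hxlast] at hxy
            exact absurd hxy.symm (hrep j (by omega))
          · omega
      · intro i hi
        rcases Nat.lt_or_ge i (m + 1) with hilt | hige
        · rw [hxeq i (by omega), hxeq (i + 1) (by omega)]
          exact hadj i (by omega)
        · have : i = m + 1 := by omega
          subst this
          rw [hxeq (m + 1) (by omega), hxlast]
          exact hb
      · rw [hxeq 0 (by omega)]; exact h0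
      · rw [hxeq 1 (by omega)]; exact h1

lemma trail (hdeg : ∀ v : V, 2 ≤ G.degree v) {d : G.Dart}
    (hrev : ¬ Reach G d d.symm) : TrailCycle d := by
  refine trail_aux hdeg d hrev (Fintype.card V) 0 (fun i => if i = 0 then d.fst else d.snd)
    (by omega) ?_ ?_ (by simp) (by simp)
  · intro i j hi hj hxy
    interval_cases i <;> interval_cases j <;> simp_all
  · intro i hi
    have : i = 0 := by omega
    subst this
    simpa using d.adj

/-! ### Cycles indexed by `ZMod n` -/

lemma zmod_two_ne_zero {n : ℕ} (hn : 3 ≤ n) : (2 : ZMod n) ≠ 0 := by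
  haveI : NeZero n := ⟨by omega⟩
  intro h
  have h2 : ((2 : ℕ) : ZMod n) = 0 := by push_cast; exact h
  have := (ZMod.natCast_eq_zero_iff 2 n).mp h2
  have := Nat.le_of_dvd (by norm_num) this
  omega

lemma zmod_one_ne_zero {n : ℕ} (hn : 3 ≤ n) : (1 : ZMod n) ≠ 0 := by
  haveI : NeZero n := ⟨by omega⟩
  intro h
  have h2 : ((1 : ℕ) : ZMod n) = 0 := by push_cast; exact h
  have := (ZMod.natCast_eq_zero_iff 1 n).mp h2
  have := Nat.le_of_dvd (by norm_num) this
  omega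

section Cycle

variable {n : ℕ} {x : ZMod n → V}

lemma cyc_step_fwd (hn : 3 ≤ n) (hinj : Function.Injective x)
    (hadj : ∀ i : ZMod n, G.Adj (x i) (x (i + 1))) (i : ZMod n) :
    Step G ⟨(x i, x (i + 1)), hadj i⟩ ⟨(x (i + 1), x (i + 1 + 1)), hadj (i + 1)⟩ := by
  refine ⟨rfl, ?_⟩
  intro hcon
  have hx : x (i + 1 + 1) = x i := by
    have := congrArg (fun (z : G.Dart) => z.snd) hcon
    simpa using this
  have := hinj hx
  have h2 : (2 : ZMod n) = 0 := by linear_combination this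
  exact zmod_two_ne_zero hn h2

lemma cyc_reach_fwd (hn : 3 ≤ n) (hinj : Function.Injective x)
    (hadj : ∀ i : ZMod n, G.Adj (x i) (x (i + 1))) (i j : ZMod n) :
    Reach G ⟨(x i, x (i + 1)), hadj i⟩ ⟨(x j, x (j + 1)), hadj j⟩ := by
  haveI : NeZero n := ⟨by omega⟩
  have key : ∀ (k : ℕ) (i : ZMod n),
      Reach G ⟨(x i, x (i + 1)), hadj i⟩ ⟨(x (i + (k : ZMod n)), x (i + (k : ZMod n) + 1)), hadj _⟩ := by
    intro k
    induction k with
    | zero =>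
      intro i
      have h0 : i + ((0 : ℕ) : ZMod n) = i := by push_cast; ring
      rw [h0]
      exact Relation.ReflTransGen.refl
    | succ k ihk =>
      intro i
      have hs : i + (((k + 1 : ℕ)) : ZMod n) = i + (k : ZMod n) + 1 := by push_cast; ring
      rw [hs]
      exact Relation.ReflTransGen.tail (ihk i) (cyc_step_fwd hn hinj hadj _)
  have hj : i + (((j - i).val : ℕ) : ZMod n) = j := by
    rw [ZMod.natCast_rightInverse (j - i)]
    ring
  have := key (j - i).val i
  rw [hj] at this
  exact this

lemma cyc_step_bwd (hn : 3 ≤ n) (hinj : Function.Injective x)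
    (hadj : ∀ i : ZMod n, G.Adj (x i) (x (i + 1))) (i : ZMod n) :
    Step G ⟨(x (i + 1 + 1), x (i + 1)), (hadj (i + 1)).symm⟩ ⟨(x (i + 1), x i), (hadj i).symm⟩ := by
  refine ⟨rfl, ?_⟩
  intro hcon
  have hx : x i = x (i + 1 + 1) := by
    have := congrArg (fun (z : G.Dart) => z.snd) hcon
    simpa using this
  have := hinj hx
  have h2 : (2 : ZMod n) = 0 := by linear_combination -this
  exact zmod_two_ne_zero hn h2

lemma cyc_reach_bwd (hn : 3 ≤ n) (hinj : Function.Injective x)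
    (hadj : ∀ i : ZMod n, G.Adj (x i) (x (i + 1))) (i j : ZMod n) :
    Reach G ⟨(x (i + 1), x i), (hadj i).symm⟩ ⟨(x (j + 1), x j), (hadj j).symm⟩ := by
  haveI : NeZero n := ⟨by omega⟩
  have key : ∀ (k : ℕ) (j : ZMod n),
      Reach G ⟨(x (j + (k : ZMod n) + 1), x (j + (k : ZMod n))), (hadj _).symm⟩
        ⟨(x (j + 1), x j), (hadj j).symm⟩ := by
    intro k
    induction k with
    | zero =>
      intro j
      have h0 : j + ((0 : ℕ) : ZMod n) = j := by push_cast; ring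
      rw [h0]
      exact Relation.ReflTransGen.refl
    | succ k ihk =>
      intro j
      have hs : j + (((k + 1 : ℕ)) : ZMod n) = (j + 1) + (k : ZMod n) := by push_cast; ring
      rw [hs]
      refine Relation.ReflTransGen.trans ?_ (Relation.ReflTransGen.single (cyc_step_bwd hn hinj hadj j))
      have := ihk (j + 1)
      exact this
  have hi : j + (((i - j).val : ℕ) : ZMod n) = i := by
    rw [ZMod.natCast_rightInverse (i - j)]
    ring
  have := key (i - j).val j
  rw [hi] at this
  exact this

end Cycle

/-! ### Every dart can reach its reverse -/

lemma rev_all (hconn : G.Connected) (hdeg : ∀ v : V, 2 ≤ G.degree v)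
    (hmax : ∃ v : V, 2 < G.degree v) : ∀ d : G.Dart, Reach G d d.symm := by
  intro d
  by_contra hrev
  obtain ⟨n, hn, x, hinjx, hadjx, hx0, hx1⟩ := trail hdeg hrev
  haveI : NeZero n := ⟨by omega⟩
  have hdeq : d = ⟨(x 0, x (0 + 1)), hadjx 0⟩ := by
    apply SimpleGraph.Dart.ext
    refine Prod.ext hx0.symm ?_
    show d.snd = x (0 + 1)
    rw [zero_add]; exact hx1.symm
  have hdsymm : d.symm = ⟨(x (0 + 1), x 0), (hadjx 0).symm⟩ := by
    apply SimpleGraph.Dart.ext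
    refine Prod.ext ?_ hx0.symm
    show d.snd = x (0 + 1)
    rw [zero_add]; exact hx1.symm
  have reach_fwd_from_d : ∀ t : ZMod n, Reach G d ⟨(x t, x (t + 1)), hadjx t⟩ := by
    intro t; rw [hdeq]; exact cyc_reach_fwd hn hinjx hadjx 0 t
  have reach_to_bwd : ∀ j : ZMod n, Reach G ⟨(x (j + 1), x j), (hadjx j).symm⟩ d.symm := by
    intro j; rw [hdsymm]; exact cyc_reach_bwd hn hinjx hadjx j 0
  by_cases hA : ∃ (t : ZMod n) (u : V), G.Adj (x t) u ∧ ∀ s : ZMod n, x s ≠ u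
  · -- Case A: a neighbor off the cycle
    obtain ⟨t, u, htu, hs⟩ := hA
    have ht1 : t - 1 + 1 = t := by ring
    have s1 : Step G ⟨(x (t - 1), x (t - 1 + 1)), hadjx (t - 1)⟩ ⟨(x t, u), htu⟩ := by
      refine ⟨congrArg x ht1, ?_⟩
      intro hcon
      have : u = x (t - 1) := by
        have := congrArg (fun z : G.Dart => z.snd) hcon
        simpa using this
      exact hs (t - 1) this.symm
    have hreach_g : Reach G d ⟨(x t, u), htu⟩ :=
      Relation.ReflTransGen.tail (reach_fwd_from_d (t - 1)) s1
    have hrevg : ¬ Reach G (⟨(x t, u), htu⟩ : G.Dart) (⟨(x t, u), htu⟩ : G.Dart).symm := by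
      intro h
      exact hrev ((hreach_g.trans h).trans (reach_symm hreach_g))
    obtain ⟨p, hp, y, hinjy, hadjy, hy0, hy1⟩ := trail hdeg hrevg
    haveI : NeZero p := ⟨by omega⟩
    have hy0' : y 0 = x t := hy0
    have hy1' : y 1 = u := hy1
    -- the least index where the second cycle departs from the reversed first cycle
    have hPex : y (-(((p - 1 : ℕ)) : ZMod p)) ≠ x (t - (((p - 1 : ℕ)) : ZMod n)) := by
      have hcast : (((p - 1 : ℕ)) : ZMod p) = -1 := by
        rw [Nat.cast_sub (by omega : 1 ≤ p)]
        simp [ZMod.natCast_self]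
      have : y (-(((p - 1 : ℕ)) : ZMod p)) = u := by
        rw [show (-(((p - 1 : ℕ)) : ZMod p)) = 1 by rw [hcast]; ring]
        exact hy1'
      rw [this]
      exact fun hcon => hs _ hcon.symm
    classical
    have hex : ∃ j : ℕ, y (-((j : ℕ) : ZMod p)) ≠ x (t - ((j : ℕ) : ZMod n)) := ⟨p - 1, hPex⟩
    set j0 := Nat.find hex with hj0def
    have hj0spec : y (-((j0 : ℕ) : ZMod p)) ≠ x (t - ((j0 : ℕ) : ZMod n)) := Nat.find_spec hex
    have hj0min : ∀ i, i < j0 → y (-((i : ℕ) : ZMod p)) = x (t - ((i : ℕ) : ZMod n)) :=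
      fun i hi => not_ne_iff.mp (Nat.find_min hex hi)
    have hj0pos : 1 ≤ j0 := by
      rcases Nat.eq_zero_or_pos j0 with h0 | h
      · exfalso
        rw [h0] at hj0spec
        apply hj0spec
        rw [show (-(((0 : ℕ)) : ZMod p)) = 0 by push_cast; ring,
          show (t - (((0 : ℕ)) : ZMod n)) = t by push_cast; ring]
        exact hy0'
      · exact h
    have hmatch : y (-(((j0 - 1 : ℕ)) : ZMod p)) = x (t - (((j0 - 1 : ℕ)) : ZMod n)) :=
      hj0min (j0 - 1) (by omega)
    have hpidx : -((j0 : ℕ) : ZMod p) + 1 = -(((j0 - 1 : ℕ)) : ZMod p) := by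
      rw [Nat.cast_sub hj0pos]; push_cast; ring
    have hnidx : t - ((j0 : ℕ) : ZMod n) + 1 = t - (((j0 - 1 : ℕ)) : ZMod n) := by
      rw [Nat.cast_sub hj0pos]; push_cast; ring
    have hgy : (⟨(x t, u), htu⟩ : G.Dart) = ⟨(y 0, y (0 + 1)), hadjy 0⟩ := by
      apply SimpleGraph.Dart.ext
      refine Prod.ext hy0'.symm ?_
      show u = y (0 + 1)
      rw [zero_add]; exact hy1'.symm
    have r2 : Reach G ⟨(x t, u), htu⟩
        ⟨(y (-((j0 : ℕ) : ZMod p)), y (-((j0 : ℕ) : ZMod p) + 1)), hadjy _⟩ := by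
      rw [hgy]; exact cyc_reach_fwd hp hinjy hadjy 0 (-((j0 : ℕ) : ZMod p))
    have s2 : Step G ⟨(y (-((j0 : ℕ) : ZMod p)), y (-((j0 : ℕ) : ZMod p) + 1)), hadjy _⟩
        ⟨(x (t - ((j0 : ℕ) : ZMod n) + 1), x (t - ((j0 : ℕ) : ZMod n))),
          (hadjx (t - ((j0 : ℕ) : ZMod n))).symm⟩ := by
      constructor
      · show y (-((j0 : ℕ) : ZMod p) + 1) = x (t - ((j0 : ℕ) : ZMod n) + 1)
        calc y (-((j0 : ℕ) : ZMod p) + 1)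
            = y (-(((j0 - 1 : ℕ)) : ZMod p)) := congrArg y hpidx
          _ = x (t - (((j0 - 1 : ℕ)) : ZMod n)) := hmatch
          _ = x (t - ((j0 : ℕ) : ZMod n) + 1) := (congrArg x hnidx).symm
      · intro hcon
        have : x (t - ((j0 : ℕ) : ZMod n)) = y (-((j0 : ℕ) : ZMod p)) := by
          have := congrArg (fun z : G.Dart => z.snd) hcon
          simpa using this
        exact hj0spec this.symm
    exact hrev (((hreach_g.trans r2).tail s2).trans (reach_to_bwd (t - ((j0 : ℕ) : ZMod n))))
  · -- Case B: all neighbors on the cycle; find a chord at a high-degree vertex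
    push_neg at hA
    have hB : ∀ (t : ZMod n) (u : V), G.Adj (x t) u → ∃ s, x s = u := by
      intro t u h
      obtain ⟨s, hs⟩ := hA t u h
      exact ⟨s, hs⟩
    have hrange : ∀ v : V, ∃ s : ZMod n, x s = v := by
      have key : ∀ (a b : V), (w : G.Walk a b) → (∃ s, x s = a) → ∃ s, x s = b := by
        intro a b w
        induction w with
        | nil => exact id
        | @cons a c b h p ih =>
          intro ⟨s, hsa⟩
          exact ih (hB s c (hsa ▸ h))
      intro v
      obtain ⟨w⟩ := hconn.preconnected (x 0) v
      exact key _ _ w ⟨0, rfl⟩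
    obtain ⟨w, hw3⟩ := hmax
    obtain ⟨t, rfl⟩ := hrange w
    have hchord : ∃ s : ZMod n, G.Adj (x t) (x s) ∧ s ≠ t + 1 ∧ s ≠ t - 1 := by
      by_contra hc
      push_neg at hc
      have hsub : G.neighborFinset (x t) ⊆ {x (t + 1), x (t - 1)} := by
        intro u hu
        rw [SimpleGraph.mem_neighborFinset] at hu
        obtain ⟨s, rfl⟩ := hB t u hu
        rcases eq_or_ne s (t + 1) with h | h
        · subst h; exact Finset.mem_insert_self _ _
        · have := hc s hu h
          subst this
          exact Finset.mem_insert_of_mem (Finset.mem_singleton_self _)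
      have hcard := Finset.card_le_card hsub
      rw [G.card_neighborFinset_eq_degree] at hcard
      have : ({x (t + 1), x (t - 1)} : Finset V).card ≤ 2 :=
        le_trans (Finset.card_insert_le _ _) (by simp)
      omega
    obtain ⟨s, hch, hs1, hs2⟩ := hchord
    have ht1 : t - 1 + 1 = t := by ring
    have hs1' : s - 1 + 1 = s := by ring
    have sc1 : Step G ⟨(x (t - 1), x (t - 1 + 1)), hadjx (t - 1)⟩ ⟨(x t, x s), hch⟩ := by
      refine ⟨congrArg x ht1, ?_⟩
      intro hcon
      have hxx : x s = x (t - 1) := by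
        have := congrArg (fun z : G.Dart => z.snd) hcon
        simpa using this
      exact hs2 (hinjx hxx)
    have sc2 : Step G ⟨(x t, x s), hch⟩ ⟨(x (s - 1 + 1), x (s - 1)), (hadjx (s - 1)).symm⟩ := by
      refine ⟨(congrArg x hs1').symm, ?_⟩
      intro hcon
      have hxx : x (s - 1) = x t := by
        have := congrArg (fun z : G.Dart => z.snd) hcon
        simpa using this
      have : s - 1 = t := hinjx hxx
      apply hs1
      linear_combination this
    exact hrev ((((reach_fwd_from_d (t - 1)).tail sc1).tail sc2).trans (reach_to_bwd (s - 1)))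

/-! ### Assembling the reverse direction -/

lemma adjacent_reach (hrevall : ∀ f : G.Dart, Reach G f f.symm) {d e : G.Dart}
    (h : d.snd = e.fst) : Reach G d e := by
  by_cases hc : e = d.symm
  · rw [hc]; exact hrevall d
  · exact Relation.ReflTransGen.single ⟨h, hc⟩

lemma reach_all (hconn : G.Connected) (hdeg : ∀ v : V, 2 ≤ G.degree v)
    (hmax : ∃ v : V, 2 < G.degree v) : ∀ d e : G.Dart, Reach G d e := by
  have hrevall := rev_all hconn hdeg hmax
  intro d e
  have key : ∀ (a b : V) (_ : G.Walk a b) (d e : G.Dart), d.snd = a → e.fst = b → Reach G d e := by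
    intro a b w
    induction w with
    | nil =>
      intro d e hd he
      exact adjacent_reach hrevall (hd.trans he.symm)
    | @cons a c b h p ih =>
      intro d e hd he
      have h1 : Reach G d ⟨(a, c), h⟩ := adjacent_reach hrevall (by rw [hd])
      exact h1.trans (ih _ e rfl he)
  obtain ⟨w⟩ := hconn.preconnected d.snd e.fst
  exact key _ _ w d e rfl rfl

/-- For a finite graph with minimum degree at least `2`, the
non-backtracking adjacency matrix `B` is irreducible iff `G` is connected with
minimum degree at least `2` and maximum degree greater than `2`. -/
theorem B_irreducible_iff [Nonempty V] (hdeg : ∀ v : V, 2 ≤ G.degree v) :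
    MatIrreducible (B G) ↔
      (G.Connected ∧ (∀ v : V, 2 ≤ G.degree v) ∧ ∃ v : V, 2 < G.degree v) := by
  rw [matIrreducible_iff_reach]
  constructor
  · exact forward_dir hdeg
  · rintro ⟨hconn, _, hmax⟩
    exact reach_all hconn hdeg hmax


end NB
end

section
/- Let G be a finite undirected graph with minimum degree at least 2, let β:E⃗→ℝ⁺ be a strictly positive function on the directed edges, and for a non-backtracking walk ω=(e_0,…,e_ℓ) define X_β(ω)=∏_{i=0}^{ℓ−1} β(e_i). Then the expectation of X_β over Ω_ℓ with respect to the NBRW measure μ satisfies E_{Ω_ℓ}[X_β] ≥ (∏_{e∈E⃗} β(e))^{ℓ/|E⃗|}. -/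
open Finset Filter

namespace NB

variable {V : Type} [Fintype V] [DecidableEq V] (G : SimpleGraph V) [DecidableRel G.Adj]

/-! ### Auxiliary lemmas -/

lemma outdeg_pos' (hdeg : ∀ v : V, 2 ≤ G.degree v) (d : G.Dart) : 0 < outdeg G d := by
  have := hdeg d.snd
  unfold outdeg
  omega

lemma outdeg_cast_pos (hdeg : ∀ v : V, 2 ≤ G.degree v) (d : G.Dart) :
    (0 : ℝ) < (outdeg G d : ℝ) := by
  exact_mod_cast outdeg_pos' G hdeg d

lemma dart_snd_fiber_card (v : V) :
    (Finset.univ.filter fun d : G.Dart => d.snd = v).card = G.degree v := by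
  rw [← SimpleGraph.dart_fst_fiber_card_eq_degree G v]
  apply Finset.card_nbij' (fun d => d.symm) (fun d => d.symm)
  · intro a ha
    simp only [Finset.mem_coe, Finset.mem_filter, Finset.mem_univ, true_and] at ha ⊢
    exact ha
  · intro a ha
    simp only [Finset.mem_coe, Finset.mem_filter, Finset.mem_univ, true_and] at ha ⊢
    exact ha
  · intro a _; exact SimpleGraph.Dart.symm_symm a
  · intro a _; exact SimpleGraph.Dart.symm_symm a

lemma step_row_card (d : G.Dart) :
    (Finset.univ.filter fun e : G.Dart => Step G d e).card = outdeg G d := by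
  have h1 : (Finset.univ.filter fun e : G.Dart => Step G d e)
      = (Finset.univ.filter fun e : G.Dart => e.fst = d.snd).erase d.symm := by
    ext e
    simp only [Finset.mem_filter, Finset.mem_erase, Finset.mem_univ, true_and]
    simp only [Step]
    exact ⟨fun h => ⟨fun he => h.2 (by rw [he]), h.1.symm⟩, fun h => ⟨h.2.symm, fun he => h.1 (by rw [he])⟩⟩
  have hmem : d.symm ∈ (Finset.univ.filter fun e : G.Dart => e.fst = d.snd) := by
    simp only [Finset.mem_filter, Finset.mem_univ, true_and]
    rfl
  rw [h1, Finset.card_erase_of_mem hmem, SimpleGraph.dart_fst_fiber_card_eq_degree G d.snd]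
  rfl

lemma step_col_card (e : G.Dart) :
    (Finset.univ.filter fun d : G.Dart => Step G d e).card = G.degree e.fst - 1 := by
  have h1 : (Finset.univ.filter fun d : G.Dart => Step G d e)
      = (Finset.univ.filter fun d : G.Dart => d.snd = e.fst).erase e.symm := by
    ext d
    simp only [Finset.mem_filter, Finset.mem_erase, Finset.mem_univ, true_and]
    simp only [Step]
    constructor
    · rintro ⟨h, h2⟩
      refine ⟨fun hd => h2 ?_, h⟩
      rw [hd, SimpleGraph.Dart.symm_symm]
    · rintro ⟨h2, h⟩
      refine ⟨h, fun hd => h2 ?_⟩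
      rw [hd, SimpleGraph.Dart.symm_symm]
  have hmem : e.symm ∈ (Finset.univ.filter fun d : G.Dart => d.snd = e.fst) := by
    simp only [Finset.mem_filter, Finset.mem_univ, true_and]
    rfl
  rw [h1, Finset.card_erase_of_mem hmem, dart_snd_fiber_card G e.fst]

lemma row_sum (hdeg : ∀ v : V, 2 ≤ G.degree v) (d : G.Dart) :
    ∑ e : G.Dart, (if Step G d e then ((outdeg G d : ℝ))⁻¹ else 0) = 1 := by
  rw [Finset.sum_ite, Finset.sum_const, Finset.sum_const_zero, add_zero,
    step_row_card G d, nsmul_eq_mul, mul_inv_cancel₀]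
  exact_mod_cast (outdeg_pos' G hdeg d).ne'

lemma col_sum (hdeg : ∀ v : V, 2 ≤ G.degree v) (e : G.Dart) :
    ∑ d : G.Dart, (if Step G d e then ((outdeg G d : ℝ))⁻¹ else 0) = 1 := by
  have key : ∀ d : G.Dart, (if Step G d e then ((outdeg G d : ℝ))⁻¹ else 0)
      = (if Step G d e then (((G.degree e.fst - 1 : ℕ) : ℝ))⁻¹ else 0) := by
    intro d
    split_ifs with h
    · have : outdeg G d = G.degree e.fst - 1 := by unfold outdeg; rw [h.1]
      rw [this]
    · rfl
  simp_rw [key]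
  rw [Finset.sum_ite, Finset.sum_const, Finset.sum_const_zero, add_zero,
    step_col_card G e, nsmul_eq_mul, mul_inv_cancel₀]
  have := hdeg e.fst
  have h1 : G.degree e.fst - 1 ≠ 0 := by omega
  exact_mod_cast h1

/-- The indicator weight of a sequence of darts. -/
noncomputable def W (ℓ : ℕ) (ω : Fin (ℓ + 1) → G.Dart) : ℝ :=
  if IsNBWalk G ω then ∏ i : Fin ℓ, ((outdeg G (ω i.castSucc) : ℝ))⁻¹ else 0

lemma isNBWalk_snoc {ℓ : ℕ} (ω : Fin (ℓ + 1) → G.Dart) (e : G.Dart) :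
    IsNBWalk G (Fin.snoc ω e) ↔ IsNBWalk G ω ∧ Step G (ω (Fin.last ℓ)) e := by
  constructor
  · intro h
    refine ⟨fun j => ?_, ?_⟩
    · simpa only [Fin.succ_castSucc, Fin.snoc_castSucc] using h j.castSucc
    · simpa only [Fin.succ_last, Fin.snoc_castSucc, Fin.snoc_last] using h (Fin.last ℓ)
  · rintro ⟨h1, h2⟩ i
    induction i using Fin.lastCases with
    | last => simpa only [Fin.succ_last, Fin.snoc_castSucc, Fin.snoc_last] using h2
    | cast j => simpa only [Fin.succ_castSucc, Fin.snoc_castSucc] using h1 j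

lemma W_snoc {ℓ : ℕ} (ω : Fin (ℓ + 1) → G.Dart) (e : G.Dart) :
    W G (ℓ + 1) (Fin.snoc ω e)
      = W G ℓ ω * (if Step G (ω (Fin.last ℓ)) e then ((outdeg G (ω (Fin.last ℓ)) : ℝ))⁻¹ else 0) := by
  unfold W
  by_cases h1 : IsNBWalk G ω <;> by_cases h2 : Step G (ω (Fin.last ℓ)) e
  · rw [if_pos ((isNBWalk_snoc G ω e).2 ⟨h1, h2⟩), if_pos h1, if_pos h2,
      Fin.prod_univ_castSucc]
    simp [Fin.snoc_castSucc]
  · rw [if_neg (fun h => h2 ((isNBWalk_snoc G ω e).1 h).2), if_neg h2, mul_zero]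
  · rw [if_neg (fun h => h1 ((isNBWalk_snoc G ω e).1 h).1), if_neg h1, zero_mul]
  · rw [if_neg (fun h => h1 ((isNBWalk_snoc G ω e).1 h).1), if_neg h1, zero_mul]

lemma sum_snoc {ℓ : ℕ} (g : (Fin (ℓ + 2) → G.Dart) → ℝ) :
    ∑ ω' : Fin (ℓ + 2) → G.Dart, g ω'
      = ∑ ω : Fin (ℓ + 1) → G.Dart, ∑ e : G.Dart, g (Fin.snoc ω e) := by
  have hbij : Function.Bijective
      (fun x : (Fin (ℓ + 1) → G.Dart) × G.Dart => (Fin.snoc x.1 x.2 : Fin (ℓ + 2) → G.Dart)) := by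
    constructor
    · intro x y hxy
      have h1 := congrArg Fin.init hxy
      have h2 := congrArg (fun f : Fin (ℓ + 2) → G.Dart => f (Fin.last (ℓ + 1))) hxy
      simp only [Fin.init_snoc, Fin.snoc_last] at h1 h2
      exact Prod.ext h1 h2
    · intro f
      exact ⟨(Fin.init f, f (Fin.last (ℓ + 1))), Fin.snoc_init_self f⟩
  rw [← Fintype.sum_bijective _ hbij (fun x => g (Fin.snoc x.1 x.2)) g (fun x => rfl)]
  exact Fintype.sum_prod_type _

lemma marginal_last (hdeg : ∀ v : V, 2 ≤ G.degree v) :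
    ∀ (ℓ : ℕ) (f : G.Dart → ℝ),
      ∑ ω : Fin (ℓ + 1) → G.Dart, W G ℓ ω * f (ω (Fin.last ℓ)) = ∑ d : G.Dart, f d
  | 0, f => by
    have h0 : ∀ ω : Fin 1 → G.Dart, W G 0 ω = 1 := by
      intro ω
      unfold W
      rw [if_pos]
      · simp
      · intro i; exact i.elim0
    simp_rw [h0, one_mul]
    exact Fintype.sum_equiv (Equiv.funUnique (Fin 1) G.Dart) _ _ (fun ω => rfl)
  | (ℓ + 1), f => by
    rw [sum_snoc]
    have hsplit : ∀ (ω : Fin (ℓ + 1) → G.Dart) (e : G.Dart),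
        W G (ℓ + 1) (Fin.snoc ω e) * f ((Fin.snoc ω e : Fin (ℓ + 2) → G.Dart) (Fin.last (ℓ + 1)))
          = W G ℓ ω * ((if Step G (ω (Fin.last ℓ)) e then ((outdeg G (ω (Fin.last ℓ)) : ℝ))⁻¹ else 0) * f e) := by
      intro ω e
      rw [W_snoc, Fin.snoc_last]
      ring
    simp_rw [hsplit, ← Finset.mul_sum]
    rw [marginal_last hdeg ℓ
      (fun d => ∑ e : G.Dart, (if Step G d e then ((outdeg G d : ℝ))⁻¹ else 0) * f e)]
    rw [Finset.sum_comm]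
    simp_rw [← Finset.sum_mul, col_sum G hdeg, one_mul]

lemma position_sum (hdeg : ∀ v : V, 2 ≤ G.degree v) :
    ∀ (ℓ : ℕ) (f : G.Dart → ℝ),
      ∑ ω : Fin (ℓ + 1) → G.Dart, W G ℓ ω * (∑ i : Fin ℓ, f (ω i.castSucc))
        = (ℓ : ℝ) * ∑ d : G.Dart, f d
  | 0, f => by simp
  | (ℓ + 1), f => by
    rw [sum_snoc]
    have hsplit : ∀ (ω : Fin (ℓ + 1) → G.Dart) (e : G.Dart),
        W G (ℓ + 1) (Fin.snoc ω e) * (∑ i : Fin (ℓ + 1), f ((Fin.snoc ω e : Fin (ℓ + 2) → G.Dart) i.castSucc))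
          = (if Step G (ω (Fin.last ℓ)) e then ((outdeg G (ω (Fin.last ℓ)) : ℝ))⁻¹ else 0) *
              (W G ℓ ω * ((∑ i : Fin ℓ, f (ω i.castSucc)) + f (ω (Fin.last ℓ)))) := by
      intro ω e
      rw [W_snoc, Fin.sum_univ_castSucc]
      simp only [Fin.snoc_castSucc]
      ring
    simp_rw [hsplit, ← Finset.sum_mul, row_sum G hdeg, one_mul, mul_add]
    rw [Finset.sum_add_distrib, position_sum hdeg ℓ f, marginal_last G hdeg ℓ f]
    push_cast
    ring

lemma sum_nbwalk_eq {ℓ : ℕ} (g : (Fin (ℓ + 1) → G.Dart) → ℝ) :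
    ∑ ω : NBWalk G ℓ, (∏ i : Fin ℓ, ((outdeg G (ω.1 i.castSucc) : ℝ))⁻¹) * g ω.1
      = ∑ ω : Fin (ℓ + 1) → G.Dart, W G ℓ ω * g ω := by
  have h1 : ∀ ω : Fin (ℓ + 1) → G.Dart,
      W G ℓ ω * g ω = if IsNBWalk G ω then (∏ i : Fin ℓ, ((outdeg G (ω i.castSucc) : ℝ))⁻¹) * g ω else 0 := by
    intro ω
    unfold W
    split_ifs <;> simp
  simp_rw [h1]
  rw [← Finset.sum_filter]
  rw [Finset.sum_subtype (p := fun ω => IsNBWalk G ω)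
    (Finset.univ.filter (fun ω => IsNBWalk G ω))
    (fun ω => by simp) (fun ω => (∏ i : Fin ℓ, ((outdeg G (ω i.castSucc) : ℝ))⁻¹) * g ω)]
  rfl

/-- For a graph with minimum degree at least `2` and a positive edge
function `β`, `E_{Ω_ℓ}[X_β] ≥ (∏_e β(e))^{ℓ/|E⃗|}`. -/
theorem expect_Xbeta_lower_bound [Nonempty V] (hdeg : ∀ v : V, 2 ≤ G.degree v)
    (beta : G.Dart → ℝ) (hbeta : ∀ d : G.Dart, 0 < beta d) (ℓ : ℕ) :
    expect G (fun ω : NBWalk G ℓ => ∏ i : Fin ℓ, beta (ω.1 i.castSucc)) ≥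
      (∏ d : G.Dart, beta d) ^ ((ℓ : ℝ) / (Fintype.card G.Dart : ℝ)) := by
  classical
  have hNE : Nonempty G.Dart := by
    obtain ⟨v⟩ := ‹Nonempty V›
    have hv : 0 < G.degree v := lt_of_lt_of_le (by norm_num) (hdeg v)
    obtain ⟨w, hw⟩ := (G.degree_pos_iff_exists_adj v).1 hv
    exact ⟨⟨(v, w), hw⟩⟩
  have hm0 : 0 < ((Fintype.card G.Dart : ℝ)) := by exact_mod_cast Fintype.card_pos
  have hmu : ∀ ω : NBWalk G ℓ, 0 ≤ mu G ω := by
    intro ω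
    unfold mu
    apply mul_nonneg (by positivity)
    apply Finset.prod_nonneg
    intro i _
    positivity
  have htot : ∑ ω : NBWalk G ℓ, mu G ω = 1 := by
    have h1 := sum_nbwalk_eq G (ℓ := ℓ) (fun _ => (1 : ℝ))
    have h2 := marginal_last G hdeg ℓ (fun _ => (1 : ℝ))
    simp only [mul_one] at h1 h2
    have h3 : ∑ ω : NBWalk G ℓ, mu G ω
        = (Fintype.card G.Dart : ℝ)⁻¹ *
            ∑ ω : NBWalk G ℓ, (∏ i : Fin ℓ, ((outdeg G (ω.1 i.castSucc) : ℝ))⁻¹) := by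
      unfold mu
      rw [Finset.mul_sum]
    rw [h3, h1, h2, Finset.sum_const, Finset.card_univ, nsmul_eq_mul, mul_one,
      inv_mul_cancel₀ hm0.ne']
  have hXpos : ∀ ω : NBWalk G ℓ, 0 < ∏ i : Fin ℓ, beta (ω.1 i.castSucc) :=
    fun ω => Finset.prod_pos (fun i _ => hbeta _)
  have jensen := convexOn_exp.map_sum_le (t := Finset.univ)
      (w := fun ω : NBWalk G ℓ => mu G ω)
      (p := fun ω : NBWalk G ℓ => Real.log (∏ i : Fin ℓ, beta (ω.1 i.castSucc)))
      (fun ω _ => hmu ω) htot (fun ω _ => Set.mem_univ _)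
  have hR : ∑ ω : NBWalk G ℓ, mu G ω • Real.exp (Real.log (∏ i : Fin ℓ, beta (ω.1 i.castSucc)))
      = expect G (fun ω : NBWalk G ℓ => ∏ i : Fin ℓ, beta (ω.1 i.castSucc)) := by
    unfold expect
    apply Finset.sum_congr rfl
    intro ω _
    rw [smul_eq_mul, Real.exp_log (hXpos ω)]
  have hprodpos : 0 < ∏ d : G.Dart, beta d := Finset.prod_pos (fun d _ => hbeta d)
  have hL : ∑ ω : NBWalk G ℓ, mu G ω • Real.log (∏ i : Fin ℓ, beta (ω.1 i.castSucc))
      = ((ℓ : ℝ) / (Fintype.card G.Dart : ℝ)) * Real.log (∏ d : G.Dart, beta d) := by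
    have hlog : ∀ ω : NBWalk G ℓ, Real.log (∏ i : Fin ℓ, beta (ω.1 i.castSucc))
        = ∑ i : Fin ℓ, Real.log (beta (ω.1 i.castSucc)) :=
      fun ω => Real.log_prod (fun i _ => (hbeta _).ne')
    have h1 := sum_nbwalk_eq G (ℓ := ℓ) (fun ω => ∑ i : Fin ℓ, Real.log (beta (ω i.castSucc)))
    have h2 := position_sum G hdeg ℓ (fun d => Real.log (beta d))
    calc ∑ ω : NBWalk G ℓ, mu G ω • Real.log (∏ i : Fin ℓ, beta (ω.1 i.castSucc))
        = (Fintype.card G.Dart : ℝ)⁻¹ * ∑ ω : NBWalk G ℓ,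
            (∏ i : Fin ℓ, ((outdeg G (ω.1 i.castSucc) : ℝ))⁻¹) *
              (∑ i : Fin ℓ, Real.log (beta (ω.1 i.castSucc))) := by
          rw [Finset.mul_sum]
          apply Finset.sum_congr rfl
          intro ω _
          rw [smul_eq_mul, hlog ω]
          unfold mu
          ring
      _ = (Fintype.card G.Dart : ℝ)⁻¹ * ((ℓ : ℝ) * ∑ d : G.Dart, Real.log (beta d)) := by
          rw [h1, h2]
      _ = ((ℓ : ℝ) / (Fintype.card G.Dart : ℝ)) * Real.log (∏ d : G.Dart, beta d) := by
          rw [Real.log_prod (fun d _ => (hbeta d).ne')]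
          ring
  rw [ge_iff_le, Real.rpow_def_of_pos hprodpos]
  calc Real.exp (Real.log (∏ d : G.Dart, beta d) * ((ℓ : ℝ) / (Fintype.card G.Dart : ℝ)))
      = Real.exp (∑ ω : NBWalk G ℓ, mu G ω • Real.log (∏ i : Fin ℓ, beta (ω.1 i.castSucc))) := by
        rw [hL]
        ring_nf
    _ ≤ ∑ ω : NBWalk G ℓ, mu G ω • Real.exp (Real.log (∏ i : Fin ℓ, beta (ω.1 i.castSucc))) := jensen
    _ = _ := hR


end NB
end
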